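/- Let (Ω, F, P) be a probability space, let γ ∈ (0,1], let ε : Ω → ℕ be a random variable with ε ≥ 1 almost surely, and let (r_i)_{i≥1} be a sequence of real random variables. Define the random normalization Γ := Σ_{i=1}^{ε} γ^{i-1} and assume its essential supremum esssup(Γ) is finite. Then for every real constant J, E[ ( Σ_{i=1}^{ε} γ^{i-1} (r_i − J) )² ] ≤ esssup(Γ) · E[ Σ_{i=1}^{ε} γ^{i-1} (r_i − J)² ] (both sides possibly infinite, with the inequality holding in the extended reals). -/

import Mathlib

/-!
The weights `γ^i / Γ` form a probability distribution on `{0, …, ε - 1}`, so Jensen's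
inequality for the square (equivalently, weighted Cauchy–Schwarz) bounds the squared discounted
sum pathwise by `Γ · Σ γ^i (r_{i+1} - J)²`. Integrating, `Γ` is replaced by its essential
supremum, which can be pulled out of the lower integral because it is finite.
-/

open MeasureTheory

theorem Finset.sq_sum_mul_le_sum_mul_sum_mul_sq {ι : Type*} (s : Finset ι) {w : ι → ℝ}
    (hw : ∀ i ∈ s, 0 ≤ w i) (x : ι → ℝ) :
    (∑ i ∈ s, w i * x i) ^ 2 ≤ (∑ i ∈ s, w i) * ∑ i ∈ s, w i * x i ^ 2 :=
  Finset.sum_sq_le_sum_mul_sum_of_sq_le_mul s hw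
    (fun i hi => mul_nonneg (hw i hi) (sq_nonneg _)) (fun i _ => le_of_eq (by ring))

theorem MeasureTheory.lintegral_le_essSup_mul_lintegral {Ω : Type*} [MeasurableSpace Ω]
    {μ : Measure Ω} {f g h : Ω → ENNReal} (hfgh : ∀ᵐ ω ∂μ, f ω ≤ g ω * h ω)
    (hg : essSup g μ ≠ ⊤) :
    ∫⁻ ω, f ω ∂μ ≤ essSup g μ * ∫⁻ ω, h ω ∂μ :=
  calc ∫⁻ ω, f ω ∂μ
      ≤ ∫⁻ ω, essSup g μ * h ω ∂μ := by
        refine lintegral_mono_ae ?_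
        filter_upwards [hfgh, ENNReal.ae_le_essSup g] with ω hf hg_le
        exact hf.trans (mul_le_mul_left hg_le _)
    _ = essSup g μ * ∫⁻ ω, h ω ∂μ := lintegral_const_mul' _ _ hg

theorem variance_inequality_general
    {Ω : Type*} [MeasurableSpace Ω] (P : Measure Ω)
    (γ : ℝ) (hγ0 : 0 < γ)
    (ε : Ω → ℕ)
    (r : ℕ → Ω → ℝ)
    (hΓ : essSup (fun ω => ENNReal.ofReal (∑ i ∈ Finset.range (ε ω), γ ^ i)) P ≠ ⊤)
    (J : ℝ) :
    ∫⁻ ω, ENNReal.ofReal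
        ((∑ i ∈ Finset.range (ε ω), γ ^ i * (r (i + 1) ω - J)) ^ 2) ∂P ≤
      essSup (fun ω => ENNReal.ofReal (∑ i ∈ Finset.range (ε ω), γ ^ i)) P *
        ∫⁻ ω, ENNReal.ofReal
          (∑ i ∈ Finset.range (ε ω), γ ^ i * (r (i + 1) ω - J) ^ 2) ∂P := by
  refine lintegral_le_essSup_mul_lintegral (Filter.Eventually.of_forall fun ω => ?_) hΓ
  have hw : ∀ i ∈ Finset.range (ε ω), 0 ≤ γ ^ i := fun i _ => by positivity
  rw [← ENNReal.ofReal_mul (Finset.sum_nonneg hw)]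
  exact ENNReal.ofReal_le_ofReal (Finset.sq_sum_mul_le_sum_mul_sum_mul_sq _ hw _)

/-- Variance inequality with stochastic horizon: if `ε ≥ 1` a.s. is the episode
length, `γ ∈ (0,1]` the discount factor, `r_i` the rewards and
`Γ = Σ_{i=1}^{ε} γ^{i-1}` has finite essential supremum, then for every real `J`,
`E[(Σ_{i=1}^{ε} γ^{i-1}(r_i − J))²] ≤ esssup(Γ) · E[Σ_{i=1}^{ε} γ^{i-1}(r_i − J)²]`
in the extended reals. -/
theorem variance_inequality
    {Ω : Type*} [MeasurableSpace Ω] (P : Measure Ω) [IsProbabilityMeasure P]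
    (γ : ℝ) (hγ0 : 0 < γ) (hγ1 : γ ≤ 1)
    (ε : Ω → ℕ) (hε : Measurable ε) (hε1 : ∀ᵐ ω ∂P, 1 ≤ ε ω)
    (r : ℕ → Ω → ℝ) (hr : ∀ i, Measurable (r i))
    (hΓ : essSup (fun ω => ENNReal.ofReal (∑ i ∈ Finset.range (ε ω), γ ^ i)) P ≠ ⊤)
    (J : ℝ) :
    ∫⁻ ω, ENNReal.ofReal
        ((∑ i ∈ Finset.range (ε ω), γ ^ i * (r (i + 1) ω - J)) ^ 2) ∂P ≤
      essSup (fun ω => ENNReal.ofReal (∑ i ∈ Finset.range (ε ω), γ ^ i)) P *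
        ∫⁻ ω, ENNReal.ofReal
          (∑ i ∈ Finset.range (ε ω), γ ^ i * (r (i + 1) ω - J) ^ 2) ∂P :=
  variance_inequality_general P γ hγ0 ε r hΓ J
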